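/- For all integers k > r ≥ 2 and real α ∈ (0, r-1) with α not an integer, ∫_0^1 (g_r^r(x) - g_k^r(x)) / (1-x)^{α+2} dx = ∑_{i=r}^{k-1} C(i, r-1) · B(i-r+1, r-1-α), where B denotes the Beta function. -/

import Mathlib

/-!
Pascal's rule makes `g_k^r - g_{k+1}^r = C(k, r-1) x^{k-r} (1-x)^r` telescope, so
`g_r^r - g_k^r = (1-x)^r ∑_{i=r}^{k-1} C(i, r-1) x^{i-r}`. Dividing by `(1-x)^{α+2}` leaves a
finite sum of integrands `x^{i-r} (1-x)^{r-α-2}`, each integrable because `r - α - 2 > -1`,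
and each integrating to `B(i-r+1, r-1-α)`.
-/

/-- `g_k^r(x) = ∑_{i=0}^{r-1} C(k,i) x^{k-i-1} (1-x)^i`. -/
noncomputable def gfun (k r : ℕ) (x : ℝ) : ℝ :=
  ∑ i ∈ Finset.range r, (k.choose i : ℝ) * x ^ (k - i - 1) * (1 - x) ^ i

/-- The Beta function `B(x,y) = ∫_0^1 t^{x-1} (1-t)^{y-1} dt`. -/
noncomputable def Beta (x y : ℝ) : ℝ :=
  ∫ t in (0:ℝ)..1, t ^ (x - 1) * (1 - t) ^ (y - 1)

open Finset MeasureTheory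

lemma gfun_succ (k r : ℕ) (x : ℝ) :
    gfun k (r + 1) x = gfun k r x + k.choose r * x ^ (k - r - 1) * (1 - x) ^ r :=
  sum_range_succ _ _

lemma gfun_sub_gfun_succ (x : ℝ) {k m : ℕ} (h : m + 1 ≤ k) :
    gfun k (m + 1) x - gfun (k + 1) (m + 1) x
      = k.choose m * x ^ (k - (m + 1)) * (1 - x) ^ (m + 1) := by
  induction m with
  | zero =>
    obtain ⟨j, rfl⟩ : ∃ j, k = j + 1 := ⟨k - 1, by omega⟩
    simp only [gfun, zero_add, range_one, sum_singleton, Nat.choose_zero_right, Nat.cast_one,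
      tsub_zero, add_tsub_cancel_right, one_mul, pow_zero, mul_one, pow_one]
    ring
  | succ m ih =>
    obtain ⟨j, rfl⟩ : ∃ j, k = j + m + 2 := ⟨k - (m + 2), by omega⟩
    have ih := ih (by omega)
    rw [show j + m + 2 - (m + 1) = j + 1 by omega] at ih
    rw [gfun_succ (j + m + 2) (m + 1), gfun_succ (j + m + 2 + 1) (m + 1),
      show j + m + 2 - (m + 1) - 1 = j by omega, show j + m + 2 + 1 - (m + 1) - 1 = j + 1 by omega,
      show j + m + 2 - (m + 1 + 1) = j by omega, Nat.choose_succ_succ' (j + m + 2) m, Nat.cast_add]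
    linear_combination ih

lemma gfun_sub_gfun_eq_sum (x : ℝ) {r k : ℕ} (hr : 1 ≤ r) (hk : r ≤ k) :
    gfun r r x - gfun k r x
      = ∑ i ∈ Ico r k, (i.choose (r - 1) : ℝ) * x ^ (i - r) * (1 - x) ^ r := by
  obtain ⟨m, rfl⟩ : ∃ m, r = m + 1 := ⟨r - 1, by omega⟩
  induction k, hk using Nat.le_induction with
  | base => simp
  | succ k hk ih =>
    rw [sum_Ico_succ_top hk, ← ih, Nat.add_sub_cancel, ← gfun_sub_gfun_succ x hk]
    ring

lemma intervalIntegrable_pow_mul_one_sub_rpow (n : ℕ) {β : ℝ} (hβ : 0 < β) :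
    IntervalIntegrable (fun t : ℝ => t ^ n * (1 - t) ^ (β - 1)) volume 0 1 := by
  have h := (intervalIntegral.intervalIntegrable_rpow' (a := 0) (b := 1)
    (show -1 < β - 1 by linarith)).comp_sub_left 1
  simp only [sub_self, sub_zero] at h
  exact h.symm.continuousOn_mul (continuous_pow n).continuousOn

lemma integral_pow_mul_one_sub_rpow (n : ℕ) (β : ℝ) :
    ∫ t in (0:ℝ)..1, t ^ n * (1 - t) ^ (β - 1) = Beta (n + 1) β := by
  simp only [Beta, add_sub_cancel_right, Real.rpow_natCast]

theorem stmt_4_general (r k : ℕ) (hr : 2 ≤ r) (hk : r < k) (α : ℝ)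
    (hα1 : α < (r : ℝ) - 1) :
    (∫ x in (0:ℝ)..1, (gfun r r x - gfun k r x) / (1 - x) ^ (α + 2))
      = ∑ i ∈ Finset.Ico r k,
          (i.choose (r - 1) : ℝ) * Beta ((i : ℝ) - r + 1) ((r : ℝ) - 1 - α) := by
  have hβ : 0 < (r : ℝ) - 1 - α := by linarith
  have hae : ∀ᵐ t ∂volume, t ∈ Set.uIoc (0:ℝ) 1 →
      (gfun r r t - gfun k r t) / (1 - t) ^ (α + 2)
        = ∑ i ∈ Ico r k,
            (i.choose (r - 1) : ℝ) * (t ^ (i - r) * (1 - t) ^ ((r : ℝ) - 1 - α - 1)) := by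
    filter_upwards [compl_mem_ae_iff.mpr (measure_singleton (1:ℝ))] with t hne ht
    have ht1 : t < 1 := lt_of_le_of_ne (Set.uIoc_of_le (zero_le_one' ℝ) ▸ ht).2 hne
    rw [gfun_sub_gfun_eq_sum t (by omega) hk.le, sum_div]
    refine sum_congr rfl fun i _ => ?_
    rw [mul_assoc, mul_div_assoc, mul_div_assoc, ← Real.rpow_natCast (1 - t) r,
      ← Real.rpow_sub (by linarith), show (r : ℝ) - (α + 2) = r - 1 - α - 1 by ring]
  rw [intervalIntegral.integral_congr_ae hae, intervalIntegral.integral_finsetSum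
    fun i _ => (intervalIntegrable_pow_mul_one_sub_rpow _ hβ).const_mul _]
  refine sum_congr rfl fun i hi => ?_
  rw [intervalIntegral.integral_const_mul, integral_pow_mul_one_sub_rpow,
    Nat.cast_sub (mem_Ico.mp hi).1]

/-- For all integers `k > r ≥ 2` and non-integer real `α ∈ (0, r-1)`,
`∫_0^1 (g_r^r(x) - g_k^r(x)) / (1-x)^{α+2} dx = ∑_{i=r}^{k-1} C(i,r-1) B(i-r+1, r-1-α)`. -/
theorem stmt_4 (r k : ℕ) (hr : 2 ≤ r) (hk : r < k) (α : ℝ)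
    (hα0 : 0 < α) (hα1 : α < (r : ℝ) - 1) (hni : ∀ n : ℤ, (n : ℝ) ≠ α) :
    (∫ x in (0:ℝ)..1, (gfun r r x - gfun k r x) / (1 - x) ^ (α + 2))
      = ∑ i ∈ Finset.Ico r k,
          (i.choose (r - 1) : ℝ) * Beta ((i : ℝ) - r + 1) ((r : ℝ) - 1 - α) :=
  stmt_4_general r k hr hk α hα1
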